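/- arXiv:2406.11076 — 5 statements merged into one kernel-verified Lean document; each statement's English description precedes it below -/
import Mathlib

section
/- Let (E, X, π) be a bundle of complete metric spaces bounded by k, i.e., each fibre π⁻¹(x) is a complete metric space of diameter ≤ k, the global distance on E ×_X E is upper semicontinuous, π is continuous and open, and for every open W and f ∈ W there exist an open neighbourhood V of f and ε > 0 with V ⊆ V_ε ⊆ W. Then for every x ∈ X, the subspace topology induced by E on the fibre π⁻¹(x) coincides with its metric topology. -/
/-- A bundle of complete metric spaces bounded by `k` over `X`: a surjection `π : E → X`
with a complete metric of diameter `≤ k` on each fibre, such that the global distance on the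
fibre product is upper semicontinuous, `π` is continuous and open, and every open set can be
`ε`-enlarged inside any open set around each of its points. -/
structure MetricBundle (k : ℝ) (E X : Type*) [TopologicalSpace E] [TopologicalSpace X] where
  π : E → X
  d : E → E → ℝ
  surj : Function.Surjective π
  d_nonneg : ∀ e f, π e = π f → 0 ≤ d e f
  d_self : ∀ e, d e e = 0
  d_symm : ∀ e f, π e = π f → d e f = d f e
  d_triangle : ∀ e f g, π e = π f → π f = π g → d e g ≤ d e f + d f g
  d_eq_zero : ∀ e f, π e = π f → d e f = 0 → e = f
  d_bounded : ∀ e f, π e = π f → d e f ≤ k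
  complete' : ∀ (x : X) (u : ℕ → E), (∀ n, π (u n) = x) →
    (∀ ε > 0, ∃ N, ∀ m ≥ N, ∀ n ≥ N, d (u m) (u n) < ε) →
    ∃ l, π l = x ∧ ∀ ε > 0, ∃ N, ∀ n ≥ N, d (u n) l < ε
  usc : UpperSemicontinuous fun p : {p : E × E // π p.1 = π p.2} => d p.1.1 p.1.2
  cont_π : Continuous π
  open_π : IsOpenMap π
  enlarge : ∀ W : Set E, IsOpen W → ∀ f ∈ W, ∃ V : Set E, IsOpen V ∧ f ∈ V ∧ ∃ ε > 0,
    V ⊆ {e | ∃ g ∈ V, π e = π g ∧ d e g < ε} ∧ {e | ∃ g ∈ V, π e = π g ∧ d e g < ε} ⊆ W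

/-- In a bundle of complete metric spaces bounded by `k`, the subspace topology induced on
each fibre coincides with the metric topology of the fibre: a subset `S` of the fibre over
`x` is open for the subspace topology iff it is metrically open. -/
theorem stmt_6 {E X : Type*} [TopologicalSpace E] [TopologicalSpace X]
    (k : ℝ) (B : MetricBundle k E X) (x : X) (S : Set E) (hS : S ⊆ B.π ⁻¹' {x}) :
    (∃ W : Set E, IsOpen W ∧ S = W ∩ B.π ⁻¹' {x}) ↔
      (∀ f ∈ S, ∃ ε > 0, ∀ g : E, B.π g = x → B.d f g < ε → g ∈ S) := by
  constructor
  · rintro ⟨W, hW, rfl⟩ f hf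
    obtain ⟨hfW, hfx⟩ := hf
    have hfx' : B.π f = x := hfx
    obtain ⟨V, _, hfV, ε, hε, _, hV2⟩ := B.enlarge W hW f hfW
    refine ⟨ε, hε, fun g hg hd => ⟨hV2 ⟨f, hfV, by rw [hg, hfx'], ?_⟩, by exact hg⟩⟩
    rw [B.d_symm g f (by rw [hg, hfx'])]
    exact hd
  · intro h
    have key : ∀ f ∈ S, ∃ U : Set E, IsOpen U ∧ f ∈ U ∧ ∀ g ∈ U, B.π g = x → g ∈ S := by
      intro f hf
      obtain ⟨ε, hε, hball⟩ := h f hf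
      have hfx : B.π f = x := hS hf
      have husc := B.usc ⟨(f, f), rfl⟩ ε (by simpa [B.d_self] using hε)
      rw [Filter.Eventually, mem_nhds_induced] at husc
      obtain ⟨t, ht, hts⟩ := husc
      rw [mem_nhds_prod_iff] at ht
      obtain ⟨A, hA, Bs, hB, hAB⟩ := ht
      obtain ⟨A', hA'A, hA'open, hfA'⟩ := mem_nhds_iff.mp hA
      obtain ⟨B', hB'B, hB'open, hfB'⟩ := mem_nhds_iff.mp hB
      refine ⟨A' ∩ B', hA'open.inter hB'open, ⟨hfA', hfB'⟩, fun g hg hgx => ?_⟩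
      have hpair : B.π f = B.π g := by rw [hfx, hgx]
      have hd : B.d f g < ε :=
        hts (show ((⟨(f, g), hpair⟩ : {p : E × E // B.π p.1 = B.π p.2}) : E × E) ∈ t from
          hAB ⟨hA'A hfA', hB'B hg.2⟩)
      exact hball g hgx hd
    choose U hUopen hfU hUsub using key
    refine ⟨⋃ f : S, U f f.2, isOpen_iUnion fun f => hUopen f f.2, ?_⟩
    ext g
    simp only [Set.mem_inter_iff, Set.mem_iUnion, Set.mem_preimage, Set.mem_singleton_iff]
    constructor
    · intro hg; exact ⟨⟨⟨g, hg⟩, hfU g hg⟩, hS hg⟩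
    · rintro ⟨⟨⟨f, hf⟩, hgU⟩, hgx⟩; exact hUsub f hf g hgU hgx
end

section
/- Let S be a set, μ an ultrafilter on S, and (M_s) a family of nonempty complete metric spaces of diameter ≤ k. The metric ultraproduct ∏ M_s/∼ (with distance the ultralimit of fibrewise distances) is canonically isometric to the directed colimit over U ∈ μ (ordered by reverse inclusion) of the sup-metric products ∏_{s∈U} M_s, computed in the category of complete metric spaces of diameter ≤ k with 1-Lipschitz maps. -/
/-!
Extending a partial family `p : ∏_{s ∈ U} M s` arbitrarily outside `U` maps the colimit into
`∏ M s` with the pseudometric `D f g = inf_{U ∈ μ} sup_{s ∈ U} d(f s, g s)`. Since the sup is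
monotone in `U`, the infimum may be restricted to subsets of the common domain of `p` and `q`,
so the extension is isometric; every family is its own extension over `U = S`.

For completeness, take `D(u n, u (n+1)) < 2⁻ⁿ` witnessed on `U n ∈ μ`. In each fibre `s`, the
sequence `u i s` stopped when `s` first leaves some `U i` is geometrically Cauchy, and its limit
`g s` is `2¹⁻ⁿ`-close to `u n s` for every `s ∈ U 0 ∩ ⋯ ∩ U (n-1)`; hence `D(u n, g) ≤ 2¹⁻ⁿ`.
-/
/-- An element of the directed colimit (over `U ∈ μ`, ordered by reverse inclusion) of the
sup-metric products `∏_{s ∈ U} M s`: a set `U ∈ μ` together with a family over `U`. -/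
def UltraColim {S : Type*} (μ : Ultrafilter S) (M : S → Type*) :=
  Σ U : {U : Set S // U ∈ μ}, ∀ s : U.1, M s.1

open Set Filter

theorem exists_dist_le_of_le_geometric_two_while {X : Type*} [PseudoMetricSpace X]
    [CompleteSpace X] {x : ℕ → X} {P : ℕ → Prop} (hP : Antitone P) {C : ℝ} (hC : 0 ≤ C)
    (hx : ∀ i, P (i + 1) → dist (x i) (x (i + 1)) ≤ C / 2 / 2 ^ i) :
    ∃ y, ∀ n, P n → dist (x n) y ≤ C / 2 ^ n := by
  classical
  -- `x` stopped at the last index where `P` holds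
  let w : ℕ → X := fun i => x (Nat.findGreatest P i)
  have hw : ∀ n, P n → w n = x n := fun n hn => congrArg x (Nat.findGreatest_eq hn)
  have hw_step : ∀ i, dist (w i) (w (i + 1)) ≤ C / 2 / 2 ^ i := by
    intro i
    by_cases h : P (i + 1)
    · rw [hw _ h, hw _ (hP i.le_succ h)]
      exact hx i h
    · simp only [w, Nat.findGreatest_succ, if_neg h, dist_self]
      positivity
  obtain ⟨y, hy⟩ := cauchySeq_tendsto_of_complete (cauchySeq_of_le_geometric_two hw_step)
  exact ⟨y, fun n hn => hw n hn ▸ dist_le_of_le_geometric_two_of_tendsto hw_step hy n⟩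

section SupDist

variable {S : Type*} {M : S → Type*} [∀ s, PseudoMetricSpace (M s)]

noncomputable def supDist (f g : ∀ s, M s) (U : Set S) : ℝ :=
  ⨆ s : U, dist (f s) (g s)

variable {f g h : ∀ s, M s} {U V : Set S}

theorem supDist_nonneg : 0 ≤ supDist f g U :=
  Real.iSup_nonneg fun _ => dist_nonneg

theorem supDist_le {c : ℝ} (hc : 0 ≤ c) (H : ∀ s ∈ U, dist (f s) (g s) ≤ c) :
    supDist f g U ≤ c :=
  Real.iSup_le (fun s => H s s.2) hc

variable {k : ℝ} (hk : ∀ (s : S) (x y : M s), dist x y ≤ k)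
include hk

theorem dist_le_supDist {s : S} (hs : s ∈ U) : dist (f s) (g s) ≤ supDist f g U :=
  le_ciSup (f := fun s : U => dist (f s) (g s))
    ⟨k, by rintro _ ⟨t, rfl⟩; exact hk _ _ _⟩ ⟨s, hs⟩

theorem supDist_mono (hUV : U ⊆ V) : supDist f g U ≤ supDist f g V :=
  supDist_le supDist_nonneg fun _ hs => dist_le_supDist hk (hUV hs)

theorem supDist_triangle : supDist f h U ≤ supDist f g U + supDist g h U :=
  supDist_le (add_nonneg supDist_nonneg supDist_nonneg) fun s hs =>
    (dist_triangle _ (g s) _).trans (add_le_add (dist_le_supDist hk hs) (dist_le_supDist hk hs))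

end SupDist

section LimsupDist

variable {S : Type*} {M : S → Type*} [∀ s, PseudoMetricSpace (M s)] (l : Filter S)

noncomputable def limsupDist (f g : ∀ s, M s) : ℝ :=
  ⨅ U : {U : Set S // U ∈ l}, supDist f g U.1

variable {l} {f g h : ∀ s, M s}

theorem limsupDist_nonneg : 0 ≤ limsupDist l f g :=
  Real.iInf_nonneg fun _ => supDist_nonneg

theorem limsupDist_le_supDist {U : Set S} (hU : U ∈ l) : limsupDist l f g ≤ supDist f g U :=
  ciInf_le ⟨0, by rintro _ ⟨V, rfl⟩; exact supDist_nonneg⟩ (⟨U, hU⟩ : {U : Set S // U ∈ l})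

theorem exists_supDist_lt_of_limsupDist_lt {ε : ℝ} (h : limsupDist l f g < ε) :
    ∃ U ∈ l, supDist f g U < ε := by
  obtain ⟨U, hU⟩ := exists_lt_of_ciInf_lt h
  exact ⟨U.1, U.2, hU⟩

theorem limsupDist_self : limsupDist l f f = 0 :=
  (le_antisymm · limsupDist_nonneg) <| (limsupDist_le_supDist univ_mem).trans <|
    supDist_le le_rfl fun s _ => (dist_self (f s)).le

variable {k : ℝ} (hk : ∀ (s : S) (x y : M s), dist x y ≤ k)
include hk

theorem limsupDist_triangle : limsupDist l f h ≤ limsupDist l f g + limsupDist l g h := by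
  refine le_of_forall_pos_le_add fun ε hε => ?_
  obtain ⟨U, hUl, hU⟩ :=
    exists_supDist_lt_of_limsupDist_lt (lt_add_of_pos_right (limsupDist l f g) (half_pos hε))
  obtain ⟨V, hVl, hV⟩ :=
    exists_supDist_lt_of_limsupDist_lt (lt_add_of_pos_right (limsupDist l g h) (half_pos hε))
  calc limsupDist l f h ≤ supDist f h (U ∩ V) := limsupDist_le_supDist (inter_mem hUl hVl)
    _ ≤ supDist f g (U ∩ V) + supDist g h (U ∩ V) := supDist_triangle hk
    _ ≤ supDist f g U + supDist g h V :=
      add_le_add (supDist_mono hk inter_subset_left) (supDist_mono hk inter_subset_right)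
    _ ≤ limsupDist l f g + limsupDist l g h + ε := by linarith

theorem limsupDist_eq_iInf_subset {V : Set S} (hV : V ∈ l) :
    limsupDist l f g = ⨅ W : {W : Set S // W ∈ l ∧ W ⊆ V}, supDist f g W.1 := by
  have : Nonempty {W : Set S // W ∈ l ∧ W ⊆ V} := ⟨⟨V, hV, subset_rfl⟩⟩
  refine le_antisymm (le_ciInf fun W => limsupDist_le_supDist W.2.1) (le_ciInf fun U => ?_)
  calc ⨅ W : {W : Set S // W ∈ l ∧ W ⊆ V}, supDist f g W.1
      ≤ supDist f g (U.1 ∩ V) :=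
        ciInf_le (f := fun W : {W : Set S // W ∈ l ∧ W ⊆ V} => supDist f g W.1)
          ⟨0, by rintro _ ⟨W, rfl⟩; exact supDist_nonneg⟩
          ⟨U.1 ∩ V, inter_mem U.2 hV, inter_subset_right⟩
    _ ≤ supDist f g U.1 := supDist_mono hk inter_subset_left

end LimsupDist

/-- Carrier of the reduced-product pseudometric `limsupDist l` on `∀ s, M s`. -/
def ReducedPi {S : Type*} (_l : Filter S) (M : S → Type*) : Type _ := ∀ s, M s

namespace ReducedPi

variable {S : Type*} {M : S → Type*} [∀ s, PseudoMetricSpace (M s)] (l : Filter S)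
  {k : ℝ} (hk : ∀ (s : S) (x y : M s), dist x y ≤ k)

noncomputable abbrev pseudoMetricSpace : PseudoMetricSpace (ReducedPi l M) where
  dist := limsupDist l
  dist_self _ := limsupDist_self
  dist_comm f g := by simp only [limsupDist, supDist, dist_comm]
  dist_triangle _ _ _ := limsupDist_triangle hk

theorem completeSpace [∀ s, CompleteSpace (M s)] :
    letI := pseudoMetricSpace l hk
    CompleteSpace (ReducedPi l M) := by
  let := pseudoMetricSpace l hk
  refine Metric.complete_of_convergent_controlled_sequences (fun n => 1 / 2 ^ n)
    (fun n => by positivity) fun u hu => ?_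
  have hstep : ∀ n, ∃ U ∈ l, supDist (u n) (u (n + 1)) U < 1 / 2 ^ n := fun n =>
    exists_supDist_lt_of_limsupDist_lt (hu n n (n + 1) le_rfl n.le_succ)
  choose U hUl hU using hstep
  have hT : ∀ n, {s | ∀ i < n, s ∈ U i} ∈ l := fun n =>
    (Set.finite_lt_nat n).eventually_all.2 fun i _ => hUl i
  have hlim : ∀ s, ∃ y, ∀ n, (∀ i < n, s ∈ U i) → dist (u n s) y ≤ 2 / 2 ^ n := fun s =>
    exists_dist_le_of_le_geometric_two_while (P := fun n => ∀ i < n, s ∈ U i)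
      (fun m n hmn hs i hi => hs i (hi.trans_le hmn)) zero_le_two fun i hs => by
        rw [div_self two_ne_zero]
        exact (dist_le_supDist hk (hs i i.lt_succ_self)).trans (hU i).le
  choose g hg using hlim
  refine ⟨(g : ReducedPi l M), tendsto_iff_dist_tendsto_zero.2 <|
    squeeze_zero (g := fun n : ℕ => 2 / 2 ^ n) (fun _ => dist_nonneg) (fun n => ?_) ?_⟩
  · exact (limsupDist_le_supDist (hT n)).trans <|
      supDist_le (by positivity) fun s hs => hg s n hs
  · exact tendsto_const_nhds.div_atTop (tendsto_pow_atTop_atTop_of_one_lt one_lt_two)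

end ReducedPi

namespace UltraColim

variable {S : Type*} {μ : Ultrafilter S} {M : S → Type*}

open Classical in
noncomputable def toPi [∀ s, Nonempty (M s)] (p : UltraColim μ M) : ∀ s, M s :=
  fun s => if h : s ∈ p.1.1 then p.2 ⟨s, h⟩ else Classical.arbitrary (M s)

def ofPi (f : ∀ s, M s) : UltraColim μ M :=
  ⟨⟨univ, univ_mem⟩, fun s => f s⟩

variable [∀ s, Nonempty (M s)]

theorem toPi_apply (p : UltraColim μ M) (s : p.1.1) : toPi p s = p.2 s :=
  dif_pos s.2

theorem toPi_ofPi (f : ∀ s, M s) : toPi (ofPi (μ := μ) f) = f :=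
  funext fun s => toPi_apply (ofPi f) ⟨s, mem_univ s⟩

variable [∀ s, PseudoMetricSpace (M s)]

noncomputable def colimDist (p q : UltraColim μ M) : ℝ :=
  ⨅ W : {W : Set S // W ∈ μ ∧ W ⊆ p.1.1 ∩ q.1.1},
    ⨆ s : W.1, dist (p.2 ⟨s.1, (W.2.2 s.2).1⟩) (q.2 ⟨s.1, (W.2.2 s.2).2⟩)

theorem limsupDist_toPi {k : ℝ} (hk : ∀ (s : S) (x y : M s), dist x y ≤ k)
    (p q : UltraColim μ M) : limsupDist μ (toPi p) (toPi q) = colimDist p q := by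
  rw [limsupDist_eq_iInf_subset hk (inter_mem p.1.2 q.1.2)]
  exact iInf_congr fun W => iSup_congr fun s =>
    congrArg₂ dist (toPi_apply p ⟨s, (W.2.2 s.2).1⟩) (toPi_apply q ⟨s, (W.2.2 s.2).2⟩)

end UltraColim

/-- The metric ultraproduct `∏ M_s / ∼` (with the ultralimit distance `D`) is canonically
isometric to the directed colimit over `U ∈ μ` of the sup-metric products `∏_{s∈U} M s`,
computed in the category of `k`-bounded complete metric spaces with `1`-Lipschitz maps:
the colimit is obtained from the set-level colimit, equipped with the infimum pseudometric
`ρ`, by identifying points at distance zero and completing.  Concretely: there is a map `Φ`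
extending each partial family, which is isometric from `(UltraColim, ρ)` to `(∏ M_s, D)`,
whose image meets every `∼`-class (so no completion is needed: the ultraproduct is already
complete). -/
theorem stmt_9 {S : Type*} (μ : Ultrafilter S) (M : S → Type*)
    [∀ s, MetricSpace (M s)] [∀ s, Nonempty (M s)] [∀ s, CompleteSpace (M s)] (k : ℝ)
    (hk : ∀ (s : S) (x y : M s), dist x y ≤ k)
    (rel : (∀ s, M s) → (∀ s, M s) → Prop)
    (hrel : rel = fun f g => ∀ ε > 0, {s | dist (f s) (g s) < ε} ∈ μ)
    (D : (∀ s, M s) → (∀ s, M s) → ℝ)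
    (hD : D = fun f g => ⨅ U : {U : Set S // U ∈ μ}, ⨆ s : U.1, dist (f s.1) (g s.1))
    (ρ : UltraColim μ M → UltraColim μ M → ℝ)
    (hρ : ρ = fun p q => ⨅ W : {W : Set S // W ∈ μ ∧ W ⊆ p.1.1 ∩ q.1.1},
      ⨆ s : W.1, dist (p.2 ⟨s.1, (W.2.2 s.2).1⟩) (q.2 ⟨s.1, (W.2.2 s.2).2⟩)) :
    ∃ Φ : UltraColim μ M → ∀ s, M s,
      (∀ p : UltraColim μ M, ∀ s : p.1.1, Φ p s.1 = p.2 s) ∧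
      (∀ p q, D (Φ p) (Φ q) = ρ p q) ∧
      (∀ f : ∀ s, M s, ∃ p, rel (Φ p) f) ∧
      (∀ u : ℕ → ∀ s, M s,
        (∀ ε > 0, ∃ N, ∀ m ≥ N, ∀ n ≥ N, D (u m) (u n) < ε) →
        ∃ g, ∀ ε > 0, ∃ N, ∀ n ≥ N, D (u n) g < ε) := by
  subst hrel hD hρ
  refine ⟨UltraColim.toPi, UltraColim.toPi_apply, UltraColim.limsupDist_toPi hk,
    fun f => ⟨UltraColim.ofPi f, ?_⟩, fun u hu => ?_⟩
  · intro ε hε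
    simp only [UltraColim.toPi_ofPi, dist_self, hε, ofPred_true]
    exact univ_mem
  · let := ReducedPi.pseudoMetricSpace (μ : Filter S) hk
    have := ReducedPi.completeSpace (μ : Filter S) hk
    let v : ℕ → ReducedPi (μ : Filter S) M := u
    obtain ⟨g, hg⟩ := cauchySeq_tendsto_of_complete (Metric.cauchySeq_iff.2 hu : CauchySeq v)
    exact ⟨g, Metric.tendsto_atTop.1 hg⟩
end

section
/- Let μ be an ultrafilter on a set S, (ν_s)_{s∈S} a family of ultrafilters on a set T, and (M_t)_{t∈T} a family of nonempty complete metric spaces bounded by k. Then the map Δ from the metric ultraproduct ∫_T M_t d(∫_S ν_s dμ) to ∫_S (∫_T M_t dν_s) dμ sending the class of (b_t)_{t∈T} to the class of the constant family ((b_t)_{t∈T})_{s∈S} (where in the s-component the class is taken with respect to ν_s) is well defined and 1-Lipschitz. -/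
/-!
A set `V` belongs to `∫_S ν_s dμ` exactly when `V ∈ ν_s` for `μ`-almost every `s`. Hence a set
on which the fibrewise distance is small along `∫_S ν_s dμ` is, for `μ`-almost every `s`, a set
on which it is small along `ν_s`; this gives both well-definedness and the Lipschitz bound.
-/

namespace Filter

variable {S T : Type*}

noncomputable def iInfSup (l : Filter T) (d : T → ℝ) : ℝ :=
  ⨅ U : {U : Set T // U ∈ l}, ⨆ t : U.1, d t

variable {l : Filter T} {d : T → ℝ}

theorem iInfSup_nonneg (hd : 0 ≤ d) : 0 ≤ iInfSup l d :=
  Real.iInf_nonneg fun _ => Real.iSup_nonneg fun t => hd t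

theorem iInfSup_le_iSup (hd : 0 ≤ d) {U : Set T} (hU : U ∈ l) :
    iInfSup l d ≤ ⨆ t : U, d t :=
  ciInf_le (f := fun V : {V : Set T // V ∈ l} => ⨆ t : V.1, d t)
    ⟨0, by rintro _ ⟨V, rfl⟩; exact Real.iSup_nonneg fun t => hd t⟩ ⟨U, hU⟩

theorem iInfSup_le_of_eventually_le (hd : 0 ≤ d) {c : ℝ} (hc : 0 ≤ c)
    (h : ∀ᶠ t in l, d t ≤ c) : iInfSup l d ≤ c :=
  (iInfSup_le_iSup hd h).trans (Real.iSup_le (fun t => t.2) hc)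

theorem iInfSup_bind_le (hd : 0 ≤ d) (μ : Filter S) (ν : S → Filter T) :
    iInfSup μ (fun s => iInfSup (ν s) d) ≤ iInfSup (μ.bind ν) d := by
  have : Nonempty {V : Set T // V ∈ μ.bind ν} := ⟨⟨Set.univ, univ_mem⟩⟩
  refine le_ciInf fun V => ?_
  calc iInfSup μ (fun s => iInfSup (ν s) d)
      ≤ ⨆ s : {s | V.1 ∈ ν s}, iInfSup (ν s) d :=
        iInfSup_le_iSup (fun _ => iInfSup_nonneg hd) (mem_bind'.mp V.2)
    _ ≤ ⨆ t : V.1, d t :=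
        Real.iSup_le (fun s => iInfSup_le_iSup hd s.2) (Real.iSup_nonneg fun t => hd t)

end Filter

theorem stmt_12_general {S T : Type*} (μ : Ultrafilter S) (ν : S → Ultrafilter T)
    (M : T → Type*) [∀ t, MetricSpace (M t)]
    (D : Ultrafilter T → (∀ t, M t) → (∀ t, M t) → ℝ)
    (hD : D = fun lam f g => ⨅ U : {U : Set T // U ∈ lam}, ⨆ t : U.1, dist (f t.1) (g t.1)) :
    (∀ f g : ∀ t, M t,
      (∀ ε > 0, {t | dist (f t) (g t) < ε} ∈ Ultrafilter.bind μ ν) →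
      (∀ ε > 0, {s | D (ν s) f g < ε} ∈ μ)) ∧
    (∀ f g : ∀ t, M t,
      (⨅ U : {U : Set S // U ∈ μ}, ⨆ s : U.1, D (ν s.1) f g) ≤ D (Ultrafilter.bind μ ν) f g) := by
  have hD' : ∀ (lam : Ultrafilter T) f g,
      D lam f g = Filter.iInfSup lam fun t => dist (f t) (g t) := by
    subst hD; intros; rfl
  refine ⟨fun f g h ε hε => ?_, fun f g => ?_⟩
  · have hsmall :
        ∀ᶠ s in (μ : Filter S), ∀ᶠ t in (ν s : Filter T), dist (f t) (g t) < ε / 2 :=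
      Filter.mem_bind'.mp (h (ε / 2) (half_pos hε))
    filter_upwards [hsmall] with s hs
    rw [hD']
    exact (Filter.iInfSup_le_of_eventually_le (fun t => dist_nonneg) (half_pos hε).le
      (hs.mono fun t => le_of_lt)).trans_lt (half_lt_self hε)
  · simp only [hD']
    exact Filter.iInfSup_bind_le (fun t => dist_nonneg (x := f t) (y := g t)) μ
      fun s => (ν s : Filter T)

/-- The categorical Fubini transform for metric ultraproducts: for an ultrafilter `μ` on
`S`, a family of ultrafilters `ν s` on `T`, and nonempty metric spaces `M t` of diameter
`≤ k`, the map sending the class of `(b_t)` in `∫_T M_t d(∫_S ν_s dμ)` to the class of the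
constant family `((b_t))_{s∈S}` in `∫_S (∫_T M_t dν_s) dμ` is well defined (independent of
the representative) and `1`-Lipschitz.  Here `D lam` is the ultralimit distance along the
ultrafilter `lam`. -/
theorem stmt_12 {S T : Type*} (μ : Ultrafilter S) (ν : S → Ultrafilter T)
    (M : T → Type*) [∀ t, MetricSpace (M t)] [∀ t, Nonempty (M t)] (k : ℝ)
    (hk : ∀ (t : T) (x y : M t), dist x y ≤ k)
    (D : Ultrafilter T → (∀ t, M t) → (∀ t, M t) → ℝ)
    (hD : D = fun lam f g => ⨅ U : {U : Set T // U ∈ lam}, ⨆ t : U.1, dist (f t.1) (g t.1)) :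
    (∀ f g : ∀ t, M t,
      (∀ ε > 0, {t | dist (f t) (g t) < ε} ∈ Ultrafilter.bind μ ν) →
      (∀ ε > 0, {s | D (ν s) f g < ε} ∈ μ)) ∧
    (∀ f g : ∀ t, M t,
      (⨅ U : {U : Set S // U ∈ μ}, ⨆ s : U.1, D (ν s.1) f g) ≤ D (Ultrafilter.bind μ ν) f g) :=
  stmt_12_general μ ν M D hD
end

section
/- Let (E, X, π) be a semicontinuous Banach bundle, μ an ultrafilter on E with πμ converging to y ∈ X, and γ : X → E a continuous section with γ(y) = f. Then the sets ⊔_{x∈U} B(γ(x), r), for U ranging over open neighbourhoods of y and r > 0, form a neighbourhood basis at f in E. -/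
/-- A semicontinuous Banach bundle (without the neighbourhood-basis axiom 5): a continuous
open surjection `π : E → X` where each fibre carries the structure of a Banach space
(fibrewise addition, scalar multiplication, zero, norm, satisfying the vector-space and
norm axioms, with complete fibres), fibrewise addition and scalar multiplication are
continuous, and the norm is upper semicontinuous. -/
structure SCBanachBundle (E X : Type*) [TopologicalSpace E] [TopologicalSpace X] where
  π : E → X
  surj : Function.Surjective π
  add : E → E → E
  smul : ℝ → E → E
  zero : X → E
  norm : E → ℝ
  π_zero : ∀ x, π (zero x) = x
  π_add : ∀ e f, π e = π f → π (add e f) = π e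
  π_smul : ∀ (c : ℝ) e, π (smul c e) = π e
  add_comm' : ∀ e f, π e = π f → add e f = add f e
  add_assoc' : ∀ e f g, π e = π f → π f = π g → add (add e f) g = add e (add f g)
  zero_add' : ∀ e, add (zero (π e)) e = e
  add_neg' : ∀ e, add e (smul (-1) e) = zero (π e)
  one_smul' : ∀ e, smul 1 e = e
  mul_smul' : ∀ (c c' : ℝ) e, smul (c * c') e = smul c (smul c' e)
  smul_add' : ∀ (c : ℝ) e f, π e = π f → smul c (add e f) = add (smul c e) (smul c f)
  add_smul' : ∀ (c c' : ℝ) e, smul (c + c') e = add (smul c e) (smul c' e)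
  norm_nonneg' : ∀ e, 0 ≤ norm e
  norm_eq_zero' : ∀ e, norm e = 0 → e = zero (π e)
  norm_smul' : ∀ (c : ℝ) e, norm (smul c e) = |c| * norm e
  norm_add' : ∀ e f, π e = π f → norm (add e f) ≤ norm e + norm f
  complete' : ∀ (x : X) (u : ℕ → E), (∀ n, π (u n) = x) →
    (∀ ε > 0, ∃ N, ∀ m ≥ N, ∀ n ≥ N, norm (add (u m) (smul (-1) (u n))) < ε) →
    ∃ l, π l = x ∧ ∀ ε > 0, ∃ N, ∀ n ≥ N, norm (add (u n) (smul (-1) l)) < ε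
  cont_π : Continuous π
  open_π : IsOpenMap π
  cont_add : Continuous fun p : {p : E × E // π p.1 = π p.2} => add p.1.1 p.1.2
  cont_smul : Continuous fun p : ℝ × E => smul p.1 p.2
  usc_norm : UpperSemicontinuous norm

/-- In a semicontinuous Banach bundle (including axiom 5: the sets `⊔_{x∈U} B(0_x,r)` form
a neighbourhood basis at each zero), given an ultrafilter `μ` on `E` whose projection
converges to `y`, and a continuous section `γ` with `γ y = f`, the sets
`⊔_{x∈U} B(γ(x), r)` for `U` an open neighbourhood of `y` and `r > 0` form a neighbourhood
basis at `f`. -/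
theorem stmt_15 {E X : Type*} [TopologicalSpace E] [TopologicalSpace X]
    (B : SCBanachBundle E X)
    (ax5 : ∀ x : X, (nhds (B.zero x)).HasBasis
        (fun p : Set X × ℝ => IsOpen p.1 ∧ x ∈ p.1 ∧ 0 < p.2)
        (fun p => {e : E | B.π e ∈ p.1 ∧ B.norm e < p.2}))
    (μ : Ultrafilter E) (y : X)
    (hμ : Filter.Tendsto B.π (μ : Filter E) (nhds y))
    (γ : X → E) (hγcont : Continuous γ) (hγsec : ∀ x, B.π (γ x) = x)
    (f : E) (hf : γ y = f) :
    (nhds f).HasBasis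
      (fun p : Set X × ℝ => IsOpen p.1 ∧ y ∈ p.1 ∧ 0 < p.2)
      (fun p => {e : E | B.π e ∈ p.1 ∧ B.norm (B.add e (B.smul (-1) (γ (B.π e)))) < p.2}) := by
  classical
  set φ : E → E := fun e => B.add e (B.smul (-1) (γ (B.π e))) with hφ
  set ψ : E → E := fun e => B.add e (γ (B.π e)) with hψ
  have hπγ : ∀ e : E, B.π (B.smul (-1) (γ (B.π e))) = B.π e := fun e => by
    rw [B.π_smul, hγsec]
  have hπφ : ∀ e, B.π (φ e) = B.π e := fun e => by
    simp only [hφ]; rw [B.π_add _ _ (hπγ e).symm]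
  have hπψ : ∀ e, B.π (ψ e) = B.π e := fun e => by
    simp only [hψ]; rw [B.π_add _ _ (hγsec (B.π e)).symm]
  have haddzero : ∀ e, B.add e (B.zero (B.π e)) = e := fun e => by
    rw [B.add_comm' _ _ (B.π_zero (B.π e)).symm, B.zero_add']
  have hψφ : ∀ e, ψ (φ e) = e := by
    intro e
    simp only [hψ, hφ, hπφ, B.π_add _ _ (hπγ e).symm]
    rw [B.add_assoc' _ _ _ (hπγ e).symm ((hπγ e).trans (hγsec (B.π e)).symm),
      B.add_comm' (B.smul (-1) (γ (B.π e))) (γ (B.π e))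
        ((hπγ e).trans (hγsec (B.π e)).symm),
      B.add_neg' (γ (B.π e)), hγsec, haddzero]
  have hφψ : ∀ e, φ (ψ e) = e := by
    intro e
    simp only [hψ, hφ, hπψ, B.π_add _ _ (hγsec (B.π e)).symm]
    rw [B.add_assoc' _ _ _ (hγsec (B.π e)).symm ((hγsec (B.π e)).trans (hπγ e).symm),
      B.add_neg' (γ (B.π e)), hγsec, haddzero]
  have hcφ : Continuous φ := by
    have h1 : Continuous fun e : E => B.smul (-1) (γ (B.π e)) :=
      B.cont_smul.comp (continuous_const.prodMk (hγcont.comp B.cont_π))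
    have h2 : Continuous (fun e : E =>
        (⟨(e, B.smul (-1) (γ (B.π e))), (hπγ e).symm⟩ :
          {p : E × E // B.π p.1 = B.π p.2})) :=
      Continuous.subtype_mk (continuous_id.prodMk h1) _
    exact B.cont_add.comp h2
  have hcψ : Continuous ψ := by
    have h1 : Continuous fun e : E => γ (B.π e) := hγcont.comp B.cont_π
    have h2 : Continuous (fun e : E =>
        (⟨(e, γ (B.π e)), (hγsec (B.π e)).symm⟩ :
          {p : E × E // B.π p.1 = B.π p.2})) :=
      Continuous.subtype_mk (continuous_id.prodMk h1) _
    exact B.cont_add.comp h2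
  let h : E ≃ₜ E := ⟨⟨φ, ψ, hψφ, hφψ⟩, hcφ, hcψ⟩
  have hφf : φ f = B.zero y := by
    simp only [hφ, ← hf, hγsec, B.add_neg']
  have hnf : nhds f = Filter.comap φ (nhds (B.zero y)) := by
    have h1 := h.comap_nhds_eq (B.zero y)
    have hsymm : h.symm (B.zero y) = f := by rw [← hφf]; exact hψφ f
    rw [show Filter.comap φ (nhds (B.zero y)) =
      Filter.comap (⇑h) (nhds (B.zero y)) from rfl, h1, hsymm]
  rw [hnf]
  refine ((ax5 y).comap φ).congr (fun _ => Iff.rfl) ?_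
  intro p _
  ext e
  simp only [Set.mem_preimage, Set.mem_setOf_eq, hπφ, hφ, B.π_add _ _ (hπγ e).symm]
end

section
/- Let X and Y be topological spaces, f : Y → X continuous, and (E, X, π) a bundle of complete metric spaces bounded by k (upper semicontinuous global distance, π continuous and open, ε-enlargement axiom). Let (E', Y, π') be the pullback of E along f in Top, with fibre metrics induced by the isometric identification E'_y ≅ E_{f(y)}. Then (E', Y, π') is again a bundle of complete metric spaces bounded by k. -/
open Topology TopologicalSpace

namespace Function.Pullback

variable {X Y Z : Type*} {f : X → Y} {g : Z → Y}

theorem apply_snd_eq_of_fst_eq {p q : f.Pullback g} (h : p.fst = q.fst) :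
    g p.snd = g q.snd :=
  p.2.symm.trans ((congrArg f h).trans q.2)

theorem fst_surjective (hg : Surjective g) : Surjective (fst : f.Pullback g → X) := fun x =>
  let ⟨z, hz⟩ := hg (f x)
  ⟨⟨(x, z), hz.symm⟩, rfl⟩

variable [TopologicalSpace X] [TopologicalSpace Z]

theorem continuous_fst : Continuous (fst : f.Pullback g → X) :=
  _root_.continuous_fst.comp continuous_subtype_val

theorem continuous_snd : Continuous (snd : f.Pullback g → Z) :=
  _root_.continuous_snd.comp continuous_subtype_val

theorem continuous_pullbackSelf_map_snd :
    Continuous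
      (PullbackSelf.map_snd : (fst : f.Pullback g → X).PullbackSelf → g.PullbackSelf) :=
  continuous_snd.mapPullback continuous_snd

variable [TopologicalSpace Y]

theorem isOpenMap_fst (hf : Continuous f) (hg : IsOpenMap g) :
    IsOpenMap (fst : f.Pullback g → X) := by
  have hB := (isTopologicalBasis_opens.prod isTopologicalBasis_opens).isInducing
    (IsInducing.subtypeVal (t := {p : X × Z | f p.1 = g p.2}))
  rw [hB.isOpenMap_iff]
  rintro _ ⟨_, ⟨U, hU, V, hV, rfl⟩, rfl⟩
  convert hU.inter ((hg V hV).preimage hf) using 1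
  ext x
  constructor
  · rintro ⟨p, ⟨hpU, hpV⟩, rfl⟩
    exact ⟨hpU, p.1.2, hpV, p.2.symm⟩
  · rintro ⟨hxU, z, hzV, hz⟩
    exact ⟨⟨(x, z), hz.symm⟩, ⟨hxU, hzV⟩, rfl⟩

end Function.Pullback

namespace MetricBundle

variable {k : ℝ} {E X Y : Type*} [TopologicalSpace E] [TopologicalSpace X] [TopologicalSpace Y]
  (B : MetricBundle k E X) {f : Y → X}

open Function.Pullback (apply_snd_eq_of_fst_eq)

theorem exists_enlargement_pullback {W : Set (f.Pullback B.π)} (hW : IsOpen W)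
    {p : f.Pullback B.π} (hp : p ∈ W) :
    ∃ V : Set (f.Pullback B.π), IsOpen V ∧ p ∈ V ∧ ∃ ε > 0,
      V ⊆ {q | ∃ r ∈ V, q.fst = r.fst ∧ B.d q.snd r.snd < ε} ∧
      {q | ∃ r ∈ V, q.fst = r.fst ∧ B.d q.snd r.snd < ε} ⊆ W := by
  obtain ⟨U, hU, rfl⟩ := isOpen_induced_iff.mp hW
  obtain ⟨U₁, O, hU₁, hO, hpU₁, hpO, hUO⟩ := isOpen_prod_iff.mp hU p.fst p.snd hp
  obtain ⟨V, hV, hpV, ε, hε, -, hVO⟩ := B.enlarge O hO p.snd hpO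
  refine ⟨Subtype.val ⁻¹' (U₁ ×ˢ V), (hU₁.prod hV).preimage continuous_subtype_val,
    ⟨hpU₁, hpV⟩, ε, hε, fun q hq => ⟨q, hq, rfl, (B.d_self _).trans_lt hε⟩, ?_⟩
  rintro q ⟨r, ⟨hrU₁, hrV⟩, hqr : q.1.1 = r.1.1, hd⟩
  exact hUO ⟨hqr ▸ hrU₁, hVO ⟨r.snd, hrV, apply_snd_eq_of_fst_eq hqr, hd⟩⟩

def pullback (hf : Continuous f) : MetricBundle k (f.Pullback B.π) Y where
  π := Function.Pullback.fst
  d p q := B.d p.snd q.snd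
  surj := Function.Pullback.fst_surjective B.surj
  d_nonneg _ _ h := B.d_nonneg _ _ (apply_snd_eq_of_fst_eq h)
  d_self _ := B.d_self _
  d_symm _ _ h := B.d_symm _ _ (apply_snd_eq_of_fst_eq h)
  d_triangle _ _ _ h₁ h₂ :=
    B.d_triangle _ _ _ (apply_snd_eq_of_fst_eq h₁) (apply_snd_eq_of_fst_eq h₂)
  d_eq_zero _ _ h hd := Subtype.ext (Prod.ext h (B.d_eq_zero _ _ (apply_snd_eq_of_fst_eq h) hd))
  d_bounded _ _ h := B.d_bounded _ _ (apply_snd_eq_of_fst_eq h)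
  complete' y u hu hcauchy := by
    obtain ⟨l, hl, hlim⟩ := B.complete' (f y) (fun n => (u n).snd)
      (fun n => (u n).2.symm.trans (congrArg f (hu n))) hcauchy
    exact ⟨⟨(y, l), hl.symm⟩, rfl, hlim⟩
  usc := B.usc.comp Function.Pullback.continuous_pullbackSelf_map_snd
  cont_π := Function.Pullback.continuous_fst
  open_π := Function.Pullback.isOpenMap_fst hf B.open_π
  enlarge _ hW _ hp := B.exists_enlargement_pullback hW hp

end MetricBundle

/-- The pullback of a bundle of complete metric spaces bounded by `k` along a continuous map
`f : Y → X`, computed in `Top` (with the fibre metrics induced by the isometric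
identifications `E'_y ≅ E_{f y}`), is again a bundle of complete metric spaces bounded by
`k`. -/
theorem stmt_19 {E X Y : Type*} [TopologicalSpace E] [TopologicalSpace X]
    [TopologicalSpace Y] (k : ℝ) (B : MetricBundle k E X)
    (f : Y → X) (hf : Continuous f) :
    ∃ B' : MetricBundle k {p : Y × E // f p.1 = B.π p.2} Y,
      (B'.π = fun p => p.1.1) ∧ (B'.d = fun p q => B.d p.1.2 q.1.2) :=
  ⟨B.pullback hf, rfl, rfl⟩
end
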